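/- arXiv:2512.13310 — 4 statements merged into one kernel-verified Lean document; each statement's English description precedes it below -/
import Mathlib

section
/- Fix an integer p ≥ 1 and a real s ≥ 2. On the product space H = ⊕_{j=1}^p L²([0,1]) equipped with the norm ‖X‖_{H,s} = (Σ_j ‖X_j‖_{L²}^s)^{1/s}, for any X, V ∈ H the function t ↦ ‖X + tV‖_{H,s}² is twice differentiable at t = 0 (when all components of X are nonzero) and satisfies ∂²_t|_{t=0} ‖X + tV‖_{H,s}² ≤ 2(s−1) ‖V‖_{H,s}². -/
/-!
Along the line `t ↦ X + tV`, each summand `‖X_j + tV_j‖^s = (‖X_j + tV_j‖²)^(s/2)` has second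
derivative `s(s-2)‖X_j‖^(s-4)⟪X_j, V_j⟫² + s‖X_j‖^(s-2)‖V_j‖²` at `0`, which Cauchy–Schwarz bounds
by `s(s-1)‖X_j‖^(s-2)‖V_j‖²`. Since `2/s ≤ 1`, the outer power is concave, so the second derivative
of `g^(2/s)` is at most `(2/s) g^(2/s-1) g''` for `g = Σ_j ‖X_j + tV_j‖^s`. Hölder with exponents
`s/(s-2)` and `s/2` gives `Σ_j ‖X_j‖^(s-2)‖V_j‖² ≤ g(0)^(1-2/s) (Σ_j ‖V_j‖^s)^(2/s)`, and the
powers of `g(0)` cancel.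
-/

open Filter Topology Finset MeasureTheory
open scoped RealInnerProductSpace

def HasSecondDerivAt (f : ℝ → ℝ) (f'' x : ℝ) : Prop :=
  (∀ᶠ y in 𝓝 x, DifferentiableAt ℝ f y) ∧ HasDerivAt (deriv f) f'' x

namespace HasSecondDerivAt

variable {f : ℝ → ℝ} {f'' x : ℝ}

theorem differentiableAt (h : HasSecondDerivAt f f'' x) : DifferentiableAt ℝ f x :=
  h.1.self_of_nhds

theorem differentiableAt_deriv (h : HasSecondDerivAt f f'' x) :
    DifferentiableAt ℝ (deriv f) x :=
  h.2.differentiableAt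

theorem iteratedDeriv_two (h : HasSecondDerivAt f f'' x) : iteratedDeriv 2 f x = f'' := by
  rw [iteratedDeriv_succ, iteratedDeriv_one, h.2.deriv]

theorem sum {ι : Type*} {f : ι → ℝ → ℝ} {f'' : ι → ℝ} (u : Finset ι)
    (h : ∀ i ∈ u, HasSecondDerivAt (f i) (f'' i) x) :
    HasSecondDerivAt (fun y => ∑ i ∈ u, f i y) (∑ i ∈ u, f'' i) x := by
  have hdiff : ∀ᶠ y in 𝓝 x, ∀ i ∈ u, DifferentiableAt ℝ (f i) y :=
    (eventually_all_finset u).2 fun i hi => (h i hi).1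
  refine ⟨hdiff.mono fun y hy => DifferentiableAt.fun_sum hy, ?_⟩
  refine (HasDerivAt.fun_sum fun i hi => (h i hi).2).congr_of_eventuallyEq ?_
  exact hdiff.mono fun y hy => deriv_fun_sum hy

theorem rpow_const (h : HasSecondDerivAt f f'' x) (hx : 0 < f x) (r : ℝ) :
    HasSecondDerivAt (fun y => f y ^ r)
      (r * (r - 1) * f x ^ (r - 2) * deriv f x ^ 2 + r * f x ^ (r - 1) * f'') x := by
  have hpos : ∀ᶠ y in 𝓝 x, 0 < f y :=
    h.differentiableAt.continuousAt.eventually (eventually_gt_nhds hx)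
  have hdiff : ∀ᶠ y in 𝓝 x, DifferentiableAt ℝ f y ∧ 0 < f y := h.1.and hpos
  refine ⟨hdiff.mono fun y hy => hy.1.rpow_const (Or.inl hy.2.ne'), ?_⟩
  have hderiv : deriv (fun y => f y ^ r) =ᶠ[𝓝 x] fun y => deriv f y * r * f y ^ (r - 1) :=
    hdiff.mono fun y hy => deriv_rpow_const hy.1 (Or.inl hy.2.ne')
  refine HasDerivAt.congr_of_eventuallyEq ?_ hderiv
  refine ((h.2.mul_const r).mul (h.differentiableAt.hasDerivAt.rpow_const (p := r - 1)
    (Or.inl hx.ne'))).congr_deriv ?_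
  rw [show r - 1 - 1 = r - 2 by ring]
  ring

theorem exists_rpow_const_le (h : HasSecondDerivAt f f'' x) (hx : 0 < f x) {r : ℝ}
    (hr₀ : 0 ≤ r) (hr₁ : r ≤ 1) :
    ∃ F'' ≤ r * f x ^ (r - 1) * f'', HasSecondDerivAt (fun y => f y ^ r) F'' x := by
  refine ⟨_, ?_, h.rpow_const hx r⟩
  have hr : r * (r - 1) ≤ 0 := mul_nonpos_of_nonneg_of_nonpos hr₀ (by linarith)
  have hconcave : r * (r - 1) * f x ^ (r - 2) * deriv f x ^ 2 ≤ 0 := by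
    rw [mul_assoc]
    exact mul_nonpos_of_nonpos_of_nonneg hr (by positivity)
  linarith

end HasSecondDerivAt

section NormAlongLine

variable {E : Type*} [NormedAddCommGroup E] [InnerProductSpace ℝ E]

theorem hasDerivAt_norm_add_smul_sq (x v : E) (t : ℝ) :
    HasDerivAt (fun t : ℝ => ‖x + t • v‖ ^ 2) (2 * ⟪x + t • v, v⟫) t := by
  simpa using ((hasDerivAt_id t).smul_const v).const_add x |>.norm_sq

theorem hasSecondDerivAt_norm_add_smul_sq (x v : E) (t : ℝ) :
    HasSecondDerivAt (fun t : ℝ => ‖x + t • v‖ ^ 2) (2 * ‖v‖ ^ 2) t := by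
  refine ⟨.of_forall fun t => (hasDerivAt_norm_add_smul_sq x v t).differentiableAt, ?_⟩
  have hderiv : deriv (fun t : ℝ => ‖x + t • v‖ ^ 2) = fun t => 2 * ⟪x + t • v, v⟫ :=
    funext fun t => (hasDerivAt_norm_add_smul_sq x v t).deriv
  rw [hderiv]
  have hline : HasDerivAt (fun t : ℝ => x + t • v) v t := by
    simpa using ((hasDerivAt_id t).smul_const v).const_add x
  simpa [real_inner_self_eq_norm_sq] using
    (hline.inner ℝ (hasDerivAt_const t v)).const_mul (2 : ℝ)

theorem exists_hasSecondDerivAt_norm_add_smul_rpow_le {x : E} (hx : x ≠ 0) (v : E) {s : ℝ}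
    (hs : 2 ≤ s) :
    ∃ f'' ≤ s * (s - 1) * ‖x‖ ^ (s - 2) * ‖v‖ ^ 2,
      HasSecondDerivAt (fun t : ℝ => ‖x + t • v‖ ^ s) f'' 0 := by
  have hx2 : 0 < ‖x + (0 : ℝ) • v‖ ^ 2 := by simpa using pow_pos (norm_pos_iff.2 hx) 2
  have hrpow : (fun t : ℝ => ‖x + t • v‖ ^ s) = fun t => (‖x + t • v‖ ^ 2) ^ (s / 2) := by
    funext t
    rw [← Real.rpow_natCast_mul (norm_nonneg _)]
    ring_nf
  refine ⟨_, ?_, hrpow ▸ (hasSecondDerivAt_norm_add_smul_sq x v 0).rpow_const hx2 (s / 2)⟩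
  rw [(hasDerivAt_norm_add_smul_sq x v 0).deriv, zero_smul, add_zero]
  set a := ‖x‖ ^ 2
  have ha : 0 < a := by positivity
  have hcs : ⟪x, v⟫ ^ 2 ≤ a * ‖v‖ ^ 2 := by
    rw [← mul_pow, ← sq_abs]
    exact pow_le_pow_left₀ (abs_nonneg _) (abs_real_inner_le_norm x v) 2
  have hkey : a ^ (s / 2 - 2) * ⟪x, v⟫ ^ 2 ≤ a ^ (s / 2 - 1) * ‖v‖ ^ 2 := by
    calc a ^ (s / 2 - 2) * ⟪x, v⟫ ^ 2 ≤ a ^ (s / 2 - 2) * (a * ‖v‖ ^ 2) :=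
          mul_le_mul_of_nonneg_left hcs (by positivity)
      _ = a ^ (s / 2 - 1) * ‖v‖ ^ 2 := by
        rw [show s / 2 - 1 = s / 2 - 2 + 1 by ring, Real.rpow_add_one ha.ne']
        ring
  have hpow : a ^ (s / 2 - 1) = ‖x‖ ^ (s - 2) := by
    rw [← Real.rpow_natCast_mul (norm_nonneg _)]
    ring_nf
  rw [← hpow]
  nlinarith [mul_le_mul_of_nonneg_left hkey (by nlinarith : 0 ≤ s * (s - 2))]

end NormAlongLine

theorem sum_rpow_sub_two_mul_sq_le {ι : Type*} (u : Finset ι) {f g : ι → ℝ}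
    (hf : ∀ i ∈ u, 0 ≤ f i) (hg : ∀ i ∈ u, 0 ≤ g i) {s : ℝ} (hs : 2 ≤ s) :
    ∑ i ∈ u, f i ^ (s - 2) * g i ^ 2 ≤
      (∑ i ∈ u, f i ^ s) ^ (1 - 2 / s) * (∑ i ∈ u, g i ^ s) ^ (2 / s) := by
  rcases hs.eq_or_lt with rfl | hs
  · simp
  have hpq : (s / (s - 2)).HolderConjugate (s / 2) :=
    Real.holderConjugate_iff.mpr ⟨by rw [one_lt_div] <;> linarith, by field_simp; ring⟩
  convert Real.inner_le_Lp_mul_Lq_of_nonneg u hpq (f := fun i => f i ^ (s - 2))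
    (g := fun i => g i ^ 2) (fun i hi => Real.rpow_nonneg (hf i hi) _)
    (fun i hi => pow_nonneg (hg i hi) 2) using 3
  · refine sum_congr rfl fun i hi => ?_
    rw [← Real.rpow_mul (hf i hi), mul_div_cancel₀ _ (by linarith)]
  · field_simp
  · refine sum_congr rfl fun i hi => ?_
    rw [← Real.rpow_natCast_mul (hg i hi)]
    ring_nf
  · rw [one_div_div]

/-- `(2, √(s−1))`-smoothness of the composite norm on `H = ⊕_{j=1}^p L²([0,1])` with
`‖X‖_{H,s} = (Σ_j ‖X_j‖_{L²}^s)^{1/s}`: for `s ≥ 2` and `X, V ∈ H` with all components of `X`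
nonzero, the function `t ↦ ‖X + tV‖_{H,s}²` is twice differentiable at `t = 0` and its second
derivative there is at most `2(s−1)‖V‖_{H,s}²`. -/
theorem composite_norm_two_smooth (p : ℕ) (hp : 1 ≤ p) (s : ℝ) (hs : 2 ≤ s)
    (X V : Fin p → Lp ℝ 2 (volume.restrict (Set.Icc (0 : ℝ) 1)))
    (hX : ∀ j, X j ≠ 0) :
    letI N : ℝ → ℝ := fun t => (∑ j, ‖X j + t • V j‖ ^ s) ^ (2 / s)
    DifferentiableAt ℝ N 0 ∧ DifferentiableAt ℝ (deriv N) 0 ∧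
      iteratedDeriv 2 N 0 ≤ 2 * (s - 1) * (∑ j, ‖V j‖ ^ s) ^ (2 / s) := by
  choose f'' hf''_le hf'' using
    fun j => exists_hasSecondDerivAt_norm_add_smul_rpow_le (hX j) (V j) hs
  set A := ∑ j, ‖X j‖ ^ s
  set W := ∑ j, ‖V j‖ ^ s
  have hA : 0 < A := sum_pos (fun j _ => Real.rpow_pos_of_pos (norm_pos_iff.2 (hX j)) s)
    (univ_nonempty_iff.2 ⟨⟨0, hp⟩⟩)
  obtain ⟨F'', hF''_le, hN⟩ := (HasSecondDerivAt.sum univ fun j _ => hf'' j).exists_rpow_const_le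
    (by simpa using hA) (by positivity) (div_le_one_of_le₀ hs (by linarith))
  refine ⟨hN.differentiableAt, hN.differentiableAt_deriv, hN.iteratedDeriv_two.trans_le ?_⟩
  calc F'' ≤ 2 / s * A ^ (2 / s - 1) * ∑ j, f'' j := by simpa using hF''_le
    _ ≤ 2 / s * A ^ (2 / s - 1) * ∑ j, s * (s - 1) * ‖X j‖ ^ (s - 2) * ‖V j‖ ^ 2 := by
      gcongr with j
      exact hf''_le j
    _ = 2 * (s - 1) * A ^ (2 / s - 1) * ∑ j, ‖X j‖ ^ (s - 2) * ‖V j‖ ^ 2 := by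
      simp only [mul_assoc, ← mul_sum]
      field_simp
    _ ≤ 2 * (s - 1) * A ^ (2 / s - 1) * (A ^ (1 - 2 / s) * W ^ (2 / s)) :=
      mul_le_mul_of_nonneg_left (sum_rpow_sub_two_mul_sq_le univ (fun j _ => norm_nonneg (X j))
        (fun j _ => norm_nonneg (V j)) hs) (mul_nonneg (by linarith) (by positivity))
    _ = 2 * (s - 1) * (A ^ (2 / s - 1) * A ^ (1 - 2 / s)) * W ^ (2 / s) := by ring
    _ = 2 * (s - 1) * W ^ (2 / s) := by
      rw [← Real.rpow_add hA]
      norm_num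
end

section
/- Let s_λ : S → S (with S = L²([0,1]²) and λ > 0) satisfy: (i) ‖s_λ(Z)‖_S ≤ c‖Y‖_S for all Z, Y with ‖Z − Y‖_S ≤ λ; (ii) s_λ(Z) = 0 whenever ‖Z‖_S ≤ λ; (iii) ‖s_λ(Z) − Z‖_S ≤ λ for all Z. Suppose estimators f̂_{jk} and targets f_{jk} (j,k ∈ [p]) satisfy max_{j,k} ‖f̂_{jk} − f_{jk}‖_S ≤ λ, and that max_k Σ_j ‖f_{jk}‖_S^{q*} ≤ s₀ for some 0 ≤ q* < 1 (with the convention 0⁰ = 0). Then there is a constant C depending only on c such that max_k Σ_j ‖s_λ(f̂_{jk}) − f_{jk}‖_S ≤ C s₀ λ^{1−q*}. -/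
open MeasureTheory Set

/-- The space `S = L²([0,1]²)`. -/
noncomputable abbrev KernelSpace : Type :=
  Lp ℝ 2 ((volume.restrict (Icc (0 : ℝ) 1)).prod (volume.restrict (Icc (0 : ℝ) 1)))

/-- Deterministic rate for generalized thresholding: if `s_λ` satisfies the three thresholding
axioms with constant `c`, the elementwise errors are at most `λ`, and the targets lie in the
approximately sparse class (with the convention `0⁰ = 0`), then the row-sum error is at most
`C s₀ λ^{1−q*}` with `C` depending only on `c`. -/
theorem threshold_estimation_rate (c : ℝ) (hc : 0 < c) :
    ∃ C : ℝ, 0 < C ∧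
      ∀ (p : ℕ) (lam s₀ qs : ℝ) (slam : KernelSpace → KernelSpace)
        (fhat f : Fin p → Fin p → KernelSpace),
        0 < lam → 0 ≤ qs → qs < 1 →
        (∀ Z Y : KernelSpace, ‖Z - Y‖ ≤ lam → ‖slam Z‖ ≤ c * ‖Y‖) →
        (∀ Z : KernelSpace, ‖Z‖ ≤ lam → slam Z = 0) →
        (∀ Z : KernelSpace, ‖slam Z - Z‖ ≤ lam) →
        (∀ j k, ‖fhat j k - f j k‖ ≤ lam) →
        (∀ k, (∑ j, if ‖f j k‖ = 0 then (0 : ℝ) else ‖f j k‖ ^ qs) ≤ s₀) →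
        ∀ k, (∑ j, ‖slam (fhat j k) - f j k‖) ≤ C * s₀ * lam ^ (1 - qs) := by
  refine ⟨c + 3, by linarith, ?_⟩
  intro p lam s₀ qs slam fhat f hlam hq0 hq1 h1 h2 h3 herr hsparse k
  have hL : (0:ℝ) ≤ lam ^ (1 - qs) := Real.rpow_nonneg hlam.le _
  have hterm : ∀ j, ‖slam (fhat j k) - f j k‖ ≤
      (c+3) * lam ^ (1-qs) * (if ‖f j k‖ = 0 then (0:ℝ) else ‖f j k‖ ^ qs) := by
    intro j
    by_cases hf0 : ‖f j k‖ = 0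
    · have hf : f j k = 0 := norm_eq_zero.mp hf0
      have hh : ‖fhat j k‖ ≤ lam := by simpa [hf] using herr j k
      rw [h2 _ hh]
      simp [hf, hf0]
    · rw [if_neg hf0]
      have hfpos : 0 < ‖f j k‖ := lt_of_le_of_ne (norm_nonneg _) (Ne.symm hf0)
      have hqnn : (0:ℝ) ≤ ‖f j k‖ ^ qs := Real.rpow_nonneg (norm_nonneg _) _
      rcases le_or_gt ‖f j k‖ lam with hle | hgt
      · have hb : ‖slam (fhat j k) - f j k‖ ≤ (c+1) * ‖f j k‖ := by
          have ht := norm_sub_le (slam (fhat j k)) (f j k)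
          have := h1 (fhat j k) (f j k) (herr j k)
          linarith
        have hx : ‖f j k‖ = ‖f j k‖ ^ (1-qs) * ‖f j k‖ ^ qs := by
          rw [← Real.rpow_add hfpos]; simp
        have hp : ‖f j k‖ ^ (1-qs) ≤ lam ^ (1-qs) :=
          Real.rpow_le_rpow (norm_nonneg _) hle (by linarith)
        have hfn : (0:ℝ) ≤ ‖f j k‖ ^ (1-qs) := Real.rpow_nonneg (norm_nonneg _) _
        calc ‖slam (fhat j k) - f j k‖ ≤ (c+1) * (‖f j k‖ ^ (1-qs) * ‖f j k‖ ^ qs) := by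
              rw [← hx]; exact hb
          _ ≤ (c+1) * (lam ^ (1-qs) * ‖f j k‖ ^ qs) :=
              mul_le_mul_of_nonneg_left (mul_le_mul_of_nonneg_right hp hqnn) (by linarith)
          _ ≤ (c+3) * (lam ^ (1-qs) * ‖f j k‖ ^ qs) :=
              mul_le_mul_of_nonneg_right (by linarith) (by positivity)
          _ = (c+3) * lam ^ (1-qs) * ‖f j k‖ ^ qs := by ring
      · have hb : ‖slam (fhat j k) - f j k‖ ≤ 2 * lam := by
          have ht : ‖slam (fhat j k) - f j k‖ ≤
              ‖slam (fhat j k) - fhat j k‖ + ‖fhat j k - f j k‖ :=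
            norm_sub_le_norm_sub_add_norm_sub _ _ _
          have := h3 (fhat j k)
          have := herr j k
          linarith
        have hx : lam = lam ^ (1-qs) * lam ^ qs := by
          rw [← Real.rpow_add hlam]; simp
        have hp : lam ^ qs ≤ ‖f j k‖ ^ qs :=
          Real.rpow_le_rpow hlam.le hgt.le hq0
        have hln : (0:ℝ) ≤ lam ^ qs := Real.rpow_nonneg hlam.le _
        calc ‖slam (fhat j k) - f j k‖ ≤ 2 * (lam ^ (1-qs) * lam ^ qs) := by
              rw [← hx]; exact hb
          _ ≤ 2 * (lam ^ (1-qs) * ‖f j k‖ ^ qs) :=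
              mul_le_mul_of_nonneg_left (mul_le_mul_of_nonneg_left hp hL) (by norm_num)
          _ ≤ (c+3) * (lam ^ (1-qs) * ‖f j k‖ ^ qs) :=
              mul_le_mul_of_nonneg_right (by linarith) (by positivity)
          _ = (c+3) * lam ^ (1-qs) * ‖f j k‖ ^ qs := by ring
  calc (∑ j, ‖slam (fhat j k) - f j k‖)
      ≤ ∑ j, (c+3) * lam ^ (1-qs) * (if ‖f j k‖ = 0 then (0:ℝ) else ‖f j k‖ ^ qs) :=
        Finset.sum_le_sum fun j _ => hterm j
    _ = (c+3) * lam ^ (1-qs) * ∑ j, (if ‖f j k‖ = 0 then (0:ℝ) else ‖f j k‖ ^ qs) := by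
        rw [Finset.mul_sum]
    _ ≤ (c+3) * lam ^ (1-qs) * s₀ := by
        have : (0:ℝ) ≤ (c+3) * lam ^ (1-qs) := by positivity
        exact mul_le_mul_of_nonneg_left (hsparse k) this
    _ = (c+3) * s₀ * lam ^ (1-qs) := by ring
end

section
/- Let K : [-1,1] → ℝ be a kernel with K(0) = 1, sup_{x∈[0,1]} K(x) ≤ 1, and 1 − K(x) ≤ C_K |x|^τ for some τ > 0 and constant C_K. Let (a_h)_{h∈ℤ} be nonnegative with a_{−h} = a_h, and suppose there exist Φ₀, Φ_α > 0 and α > 0 with Σ_{|h| > m} a_h ≤ Φ_α m^{−α} for all m ≥ 1 and Σ_{h∈ℤ} a_h ≤ Φ₀. Then for every integer m₀ ≥ 1, R(m₀) := Σ_{|h| > m₀} a_h + Σ_{|h| ≤ m₀} (1 − K(h/m₀)) a_h ≤ C (Φ₀ + Φ_α) m₀^{−ατ/(τ+α)}, where C depends only on C_K, τ, α. -/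
/-!
Split the lags at the threshold `M = ⌊m₀^β⌋`, `β = τ/(τ+α)`. For `|h| ≤ M` the kernel defect is
at most `C_K (M/m₀)^τ ≤ C_K m₀^{(β-1)τ}`; for `M < |h| ≤ m₀` it is at most `C_K` and those lags
lie in the tail beyond `M`, of mass `≤ Φ_α M^{-α} ≤ 2^α Φ_α m₀^{-αβ}`. The choice of `β` makes
both exponents equal to `-ατ/(τ+α)`, which also dominates the truncation tail `Φ_α m₀^{-α}`.
-/

open Finset Real

theorem summable_ite_of_nonneg {ι : Type*} {p : ι → Prop} [DecidablePred p] {a : ι → ℝ}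
    (ha : ∀ i, 0 ≤ a i) (hs : Summable a) : Summable fun i ↦ if p i then a i else 0 :=
  hs.of_nonneg_of_le (fun i ↦ ite_nonneg (ha i) le_rfl) fun i ↦ by split_ifs <;> simp [ha i]

theorem Nat.floor_rpow_neg_le {y α : ℝ} (hy : 1 ≤ y) (hα : 0 ≤ α) :
    (⌊y⌋₊ : ℝ) ^ (-α) ≤ 2 ^ α * y ^ (-α) :=
  calc (⌊y⌋₊ : ℝ) ^ (-α) ≤ (y / 2) ^ (-α) :=
        rpow_le_rpow_of_nonpos (by positivity) (Nat.div_two_lt_floor hy).le (by linarith)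
    _ = 2 ^ α * y ^ (-α) := by
        rw [div_rpow (by positivity) zero_le_two, rpow_neg zero_le_two, div_inv_eq_mul, mul_comm]

theorem floor_rpow_div_rpow_le {x β τ : ℝ} (hx : 0 < x) (hτ : 0 ≤ τ) :
    ((⌊x ^ β⌋₊ : ℝ) / x) ^ τ ≤ x ^ ((β - 1) * τ) :=
  calc ((⌊x ^ β⌋₊ : ℝ) / x) ^ τ ≤ (x ^ β / x) ^ τ := by
        gcongr; exact Nat.floor_le (by positivity)
    _ = x ^ ((β - 1) * τ) := by rw [rpow_mul hx.le, rpow_sub_one hx.ne']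

theorem floor_rpow_rpow_neg_le {x β α : ℝ} (hx : 1 ≤ x) (hβ : 0 ≤ β) (hα : 0 ≤ α) :
    (⌊x ^ β⌋₊ : ℝ) ^ (-α) ≤ 2 ^ α * x ^ (β * -α) := by
  rw [rpow_mul (by linarith)]
  exact Nat.floor_rpow_neg_le (one_le_rpow hx hβ) hα

section Kernel

variable {K : ℝ → ℝ} {CK τ : ℝ}

theorem one_sub_kernel_mul_le (hCK : 0 ≤ CK) (hτ : 0 ≤ τ)
    (hK : ∀ x ∈ Set.Icc (-1 : ℝ) 1, 1 - K x ≤ CK * |x| ^ τ) {m : ℕ} (M : ℕ) {h : ℤ}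
    (hm : 0 < m) (hh : |h| ≤ m) {y : ℝ} (hy : 0 ≤ y) :
    (1 - K (h / m)) * y ≤ CK * ((M : ℝ) / m) ^ τ * y + CK * (if (M : ℤ) < |h| then y else 0) := by
  have hm' : (0 : ℝ) < m := by exact_mod_cast hm
  have hx : (h : ℝ) / m ∈ Set.Icc (-1 : ℝ) 1 := by
    rw [Set.mem_Icc, ← abs_le, abs_div, Nat.abs_cast, div_le_one hm']
    exact_mod_cast hh
  have hdefect : (1 - K (h / m)) * y ≤ CK * (|(h : ℝ)| / m) ^ τ * y := by
    gcongr
    simpa [abs_div] using hK _ hx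
  refine hdefect.trans ?_
  split_ifs with hMh
  · have hratio : (|(h : ℝ)| / m) ^ τ ≤ 1 :=
      rpow_le_one (by positivity) ((div_le_one hm').2 (by exact_mod_cast hh)) hτ
    have : CK * (|(h : ℝ)| / m) ^ τ * y ≤ CK * 1 * y := by gcongr
    have : 0 ≤ CK * ((M : ℝ) / m) ^ τ * y := by positivity
    linarith
  · have hhM : |(h : ℝ)| ≤ M := by exact_mod_cast not_lt.1 hMh
    simp only [mul_zero, add_zero]
    gcongr

theorem sum_one_sub_kernel_mul_le (hCK : 0 ≤ CK) (hτ : 0 ≤ τ)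
    (hK : ∀ x ∈ Set.Icc (-1 : ℝ) 1, 1 - K x ≤ CK * |x| ^ τ) {a : ℤ → ℝ} (ha : ∀ h, 0 ≤ a h)
    (hs : Summable a) {m : ℕ} (hm : 0 < m) (M : ℕ) :
    ∑ h ∈ Icc (-(m : ℤ)) m, (1 - K (h / m)) * a h ≤
      CK * ((M : ℝ) / m) ^ τ * ∑' h, a h + CK * ∑' h, if (M : ℤ) < |h| then a h else 0 :=
  calc ∑ h ∈ Icc (-(m : ℤ)) m, (1 - K (h / m)) * a h
      ≤ ∑ h ∈ Icc (-(m : ℤ)) m,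
          (CK * ((M : ℝ) / m) ^ τ * a h + CK * if (M : ℤ) < |h| then a h else 0) :=
        sum_le_sum fun h hh ↦
          one_sub_kernel_mul_le hCK hτ hK M hm (abs_le.2 (mem_Icc.1 hh)) (ha h)
    _ = CK * ((M : ℝ) / m) ^ τ * ∑ h ∈ Icc (-(m : ℤ)) m, a h +
          CK * ∑ h ∈ Icc (-(m : ℤ)) m, if (M : ℤ) < |h| then a h else 0 := by
        rw [sum_add_distrib, mul_sum, mul_sum]
    _ ≤ _ := by
        gcongr
        · exact hs.sum_le_tsum _ fun h _ ↦ ha h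
        · exact (summable_ite_of_nonneg ha hs).sum_le_tsum _ fun h _ ↦ ite_nonneg (ha h) le_rfl

end Kernel

/-- Combined truncation and kernel-smoothing error of a lag-window estimator: for a kernel
`K` with `K 0 = 1`, `K ≤ 1` on `[0,1]` and `1 − K(x) ≤ C_K |x|^τ`, and a nonnegative symmetric
summable sequence `(a_h)` with `Σ_{|h|>m} a_h ≤ Φ_α m^{−α}` and `Σ_h a_h ≤ Φ₀`, there is
`C = C(C_K, τ, α)` such that for every `m₀ ≥ 1`,
`Σ_{|h|>m₀} a_h + Σ_{|h|≤m₀} (1 − K(h/m₀)) a_h ≤ C (Φ₀ + Φ_α) m₀^{−ατ/(τ+α)}`. -/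
theorem lag_window_truncation_error (CK τ α : ℝ) (hCK : 0 ≤ CK) (hτ : 0 < τ) (hα : 0 < α) :
    ∃ C : ℝ, 0 < C ∧
      ∀ (K : ℝ → ℝ) (a : ℤ → ℝ) (Φ₀ Φα : ℝ),
        K 0 = 1 →
        (∀ x ∈ Set.Icc (0 : ℝ) 1, K x ≤ 1) →
        (∀ x ∈ Set.Icc (-1 : ℝ) 1, 1 - K x ≤ CK * |x| ^ τ) →
        (∀ h, 0 ≤ a h) →
        (∀ h : ℤ, a (-h) = a h) →
        Summable a →
        (∑' h : ℤ, a h) ≤ Φ₀ →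
        (∀ m : ℕ, 1 ≤ m →
          (∑' h : ℤ, if (m : ℤ) < |h| then a h else 0) ≤ Φα * (m : ℝ) ^ (-α)) →
        ∀ m₀ : ℕ, 1 ≤ m₀ →
          (∑' h : ℤ, if (m₀ : ℤ) < |h| then a h else 0) +
              (∑ h ∈ Finset.Icc (-(m₀ : ℤ)) (m₀ : ℤ), (1 - K ((h : ℝ) / (m₀ : ℝ))) * a h) ≤
            C * (Φ₀ + Φα) * (m₀ : ℝ) ^ (-(α * τ) / (τ + α)) := by
  have hτα : 0 < τ + α := by linarith
  have hE₁ : (τ / (τ + α) - 1) * τ = -(α * τ) / (τ + α) := by field_simp; ring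
  have hE₂ : τ / (τ + α) * -α = -(α * τ) / (τ + α) := by ring
  have hαE : -α ≤ -(α * τ) / (τ + α) := by rw [le_div_iff₀ hτα]; nlinarith
  set β := τ / (τ + α)
  set E := -(α * τ) / (τ + α)
  refine ⟨1 + CK + CK * 2 ^ α, by positivity, ?_⟩
  intro K a Φ₀ Φα _ _ hK ha _ hs hΦ₀ hΦα m hm
  have hm1 : (1 : ℝ) ≤ m := by exact_mod_cast hm
  have hM : 1 ≤ ⌊(m : ℝ) ^ β⌋₊ := Nat.one_le_floor_iff _ |>.2 (one_le_rpow hm1 (by positivity))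
  have hΦ₀0 : 0 ≤ Φ₀ := (tsum_nonneg ha).trans hΦ₀
  have hΦα0 : 0 ≤ Φα := by
    simpa using (tsum_nonneg fun h ↦ ite_nonneg (ha h) le_rfl).trans (hΦα 1 le_rfl)
  have htrunc := (hΦα m hm).trans
    (mul_le_mul_of_nonneg_left (rpow_le_rpow_of_exponent_le hm1 hαE) hΦα0)
  have hsmooth := sum_one_sub_kernel_mul_le hCK hτ.le hK ha hs hm ⌊(m : ℝ) ^ β⌋₊
  have hratio := floor_rpow_div_rpow_le (β := β) (by linarith : (0 : ℝ) < m) hτ.le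
  have htail := (hΦα _ hM).trans (mul_le_mul_of_nonneg_left
    (floor_rpow_rpow_neg_le (β := β) hm1 (by positivity) hα.le) hΦα0)
  rw [hE₁] at hratio
  rw [hE₂] at htail
  have hmE : 0 ≤ (m : ℝ) ^ E := by positivity
  calc _ ≤ Φα * m ^ E + (CK * m ^ E * Φ₀ + CK * (Φα * (2 ^ α * m ^ E))) :=
        add_le_add htrunc (hsmooth.trans (by gcongr; exact tsum_nonneg ha))
    _ ≤ (1 + CK + CK * 2 ^ α) * (Φ₀ + Φα) * m ^ E := by
        nlinarith [mul_nonneg (mul_nonneg hΦ₀0 hmE) (by positivity : (0:ℝ) ≤ 1 + CK * 2 ^ α),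
          mul_nonneg (mul_nonneg hCK hΦα0) hmE]
end

section
/- Let g : [0, 2π] → ℝ be a nonnegative trigonometric polynomial of degree at most 2m (i.e., g(θ) = Σ_{|l| ≤ 2m} c_l e^{ilθ} with g real and ≥ 0). Setting θ_h = πh/(4m) for h = 0, 1, …, 8m, one has sup_{θ ∈ [0,2π]} g(θ) ≤ 2 max_{0 ≤ h ≤ 8m} g(θ_h). -/
open Complex

lemma orth_aux (m : ℕ) (hm : 1 ≤ m) (j : ℤ) :
    ∑ h ∈ Finset.range (8 * m),
        Complex.exp ((j : ℂ) * ((Real.pi * (h : ℝ) / (4 * (m : ℝ)) : ℝ) : ℂ) * I)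
      = if (8 * m : ℤ) ∣ j then (8 * m : ℂ) else 0 := by
  have hN : (8 * m : ℕ) ≠ 0 := by positivity
  set ζ : ℂ := Complex.exp (2 * (Real.pi : ℂ) * I / (8 * m : ℕ)) with hζ
  have hprim : IsPrimitiveRoot ζ (8 * m) := Complex.isPrimitiveRoot_exp _ hN
  have hterm : ∀ h : ℕ,
      Complex.exp ((j : ℂ) * ((Real.pi * (h : ℝ) / (4 * (m : ℝ)) : ℝ) : ℂ) * I)
        = (ζ ^ j) ^ h := by
    intro h
    have : ((j : ℂ) * ((Real.pi * (h : ℝ) / (4 * (m : ℝ)) : ℝ) : ℂ) * I)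
        = ((j * h : ℤ) : ℂ) * (2 * (Real.pi : ℂ) * I / (8 * m : ℕ)) := by
      have hm' : (m : ℂ) ≠ 0 := by exact_mod_cast Nat.cast_ne_zero.mpr (by omega)
      push_cast
      field_simp
      ring
    rw [this, Complex.exp_int_mul, ← hζ, zpow_mul, zpow_natCast]
  simp only [hterm]
  by_cases hd : (8 * m : ℤ) ∣ j
  · have h1 : ζ ^ j = 1 := (hprim.zpow_eq_one_iff_dvd j).mpr hd
    simp [h1, hd]
  · have h1 : ζ ^ j ≠ 1 := fun h => hd ((hprim.zpow_eq_one_iff_dvd j).mp h)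
    rw [geom_sum_eq h1]
    have hN1 : (ζ ^ j) ^ (8 * m : ℕ) = 1 := by
      rw [← zpow_natCast, ← zpow_mul, mul_comm, zpow_mul, zpow_natCast, hprim.pow_eq_one, one_zpow]
    rw [hN1]
    simp [hd]

noncomputable def trigS (n : ℕ) (t : ℝ) : ℂ :=
  ∑ a ∈ Finset.range n, Complex.exp ((a : ℂ) * (t : ℂ) * I)

noncomputable def trigF (n : ℕ) (t : ℝ) : ℝ := Complex.normSq (trigS n t)

lemma trigF_nonneg (n : ℕ) (t : ℝ) : 0 ≤ trigF n t := Complex.normSq_nonneg _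

lemma trigF_expand (n : ℕ) (t : ℝ) :
    (trigF n t : ℂ) = ∑ a ∈ Finset.range n, ∑ b ∈ Finset.range n,
      Complex.exp ((((a : ℤ) - b : ℤ) : ℂ) * (t : ℂ) * I) := by
  rw [trigF, ← Complex.mul_conj, trigS, map_sum, Finset.sum_mul_sum]
  refine Finset.sum_congr rfl fun a _ => Finset.sum_congr rfl fun b _ => ?_
  rw [← Complex.exp_conj, ← Complex.exp_add]
  congr 1
  have : (starRingEnd ℂ) ((b : ℂ) * (t : ℂ) * I) = -((b : ℂ) * t * I) := by
    simp
  rw [this]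
  push_cast
  ring

def cnt (n : ℕ) (l : ℤ) : ℕ :=
  ((Finset.range n ×ˢ Finset.range n).filter fun p => (p.1 : ℤ) - p.2 = l).card

lemma cnt_eq (n : ℕ) (l : ℤ) (hl : l.natAbs ≤ n) : cnt n l = n - l.natAbs := by
  rw [cnt, ← Finset.card_range (n - l.natAbs)]
  apply Finset.card_bij' (fun p _ => min p.1 p.2) (fun i _ => (i + l.toNat, i + (-l).toNat))
  · intro p hp
    simp only [Finset.mem_filter, Finset.mem_product, Finset.mem_range] at hp
    simp only [Finset.mem_range]
    omega
  · intro i hi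
    simp only [Finset.mem_range] at hi
    simp only [Finset.mem_filter, Finset.mem_product, Finset.mem_range]
    refine ⟨⟨by omega, by omega⟩, by push_cast; omega⟩
  · intro p hp
    simp only [Finset.mem_filter, Finset.mem_product, Finset.mem_range] at hp
    have := hp.2
    ext <;> simp <;> omega
  · intro i hi
    simp only [Finset.mem_range] at hi
    simp
    omega

lemma rep (m n : ℕ) (hm : 1 ≤ m) (hn : n ≤ 6 * m) (l : ℤ) (hl : l.natAbs ≤ 2 * m) (x : ℝ) :
    ∑ h ∈ Finset.range (8 * m),
        (trigF n (x - Real.pi * (h : ℝ) / (4 * (m : ℝ))) : ℂ) *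
          Complex.exp ((l : ℂ) * ((Real.pi * (h : ℝ) / (4 * (m : ℝ))) : ℝ) * I)
      = (cnt n l : ℂ) * (8 * m) * Complex.exp ((l : ℂ) * (x : ℂ) * I) := by
  set θ : ℕ → ℝ := fun h => Real.pi * (h : ℝ) / (4 * (m : ℝ)) with hθ
  calc ∑ h ∈ Finset.range (8 * m), (trigF n (x - θ h) : ℂ) *
          Complex.exp ((l : ℂ) * ((θ h : ℝ) : ℂ) * I)
      = ∑ h ∈ Finset.range (8 * m), ∑ p ∈ Finset.range n ×ˢ Finset.range n,
          Complex.exp ((((p.1 : ℤ) - p.2 : ℤ) : ℂ) * ((x - θ h : ℝ) : ℂ) * I) *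
            Complex.exp ((l : ℂ) * ((θ h : ℝ) : ℂ) * I) := by
        refine Finset.sum_congr rfl fun h _ => ?_
        rw [trigF_expand, ← Finset.sum_product', Finset.sum_mul]
    _ = ∑ p ∈ Finset.range n ×ˢ Finset.range n,
          Complex.exp ((((p.1 : ℤ) - p.2 : ℤ) : ℂ) * (x : ℂ) * I) *
            ∑ h ∈ Finset.range (8 * m),
              Complex.exp (((l - ((p.1 : ℤ) - p.2) : ℤ) : ℂ) * ((θ h : ℝ) : ℂ) * I) := by
        rw [Finset.sum_comm]
        refine Finset.sum_congr rfl fun p _ => ?_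
        rw [Finset.mul_sum]
        refine Finset.sum_congr rfl fun h _ => ?_
        rw [← Complex.exp_add, ← Complex.exp_add]
        congr 1
        push_cast
        ring
    _ = ∑ p ∈ Finset.range n ×ˢ Finset.range n,
          (if ((p.1 : ℤ) - p.2 : ℤ) = l then (8 * m : ℂ) * Complex.exp ((l : ℂ) * (x : ℂ) * I)
            else 0) := by
        refine Finset.sum_congr rfl fun p hp => ?_
        rw [orth_aux m hm]
        simp only [Finset.mem_product, Finset.mem_range] at hp
        by_cases he : ((p.1 : ℤ) - p.2 : ℤ) = l
        · simp [he, mul_comm]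
        · have hnd : ¬ ((8 * m : ℤ) ∣ l - ((p.1 : ℤ) - p.2)) := by
            intro hd
            have h0 : l - ((p.1 : ℤ) - p.2) = 0 := by
              refine Int.eq_zero_of_dvd_of_natAbs_lt_natAbs hd ?_
              have h1 := hp.1
              have h2 := hp.2
              omega
            exact he (by omega)
          simp [hnd, he]
    _ = (cnt n l : ℂ) * (8 * m) * Complex.exp ((l : ℂ) * (x : ℂ) * I) := by
        rw [← Finset.sum_filter, Finset.sum_const, cnt, nsmul_eq_mul]
        ring

/-- Discretization bound for nonnegative trigonometric polynomials: if
`g(θ) = Σ_{|l| ≤ 2m} c_l e^{ilθ}` is real-valued and nonnegative, then with grid points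
`θ_h = πh/(4m)`, `h = 0, …, 8m`, one has `sup_{θ∈[0,2π]} g(θ) ≤ 2 max_h g(θ_h)`. -/
theorem trig_poly_discretization (m : ℕ) (hm : 1 ≤ m) (c : ℤ → ℂ) (g : ℝ → ℝ)
    (hg : ∀ θ : ℝ, (g θ : ℂ) =
      ∑ l ∈ Finset.Icc (-(2 * (m : ℤ))) (2 * (m : ℤ)),
        c l * Complex.exp ((l : ℂ) * (θ : ℂ) * Complex.I))
    (hpos : ∀ θ : ℝ, 0 ≤ g θ) :
    ∀ θ ∈ Set.Icc (0 : ℝ) (2 * Real.pi),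
      g θ ≤ 2 * ⨆ h : Fin (8 * m + 1), g (Real.pi * (h : ℝ) / (4 * (m : ℝ))) := by
  intro x _
  set θf : ℕ → ℝ := fun h => Real.pi * (h : ℝ) / (4 * (m : ℝ)) with hθf
  set M : ℝ := ⨆ h : Fin (8 * m + 1), g (Real.pi * (h : ℝ) / (4 * (m : ℝ))) with hM
  have hbdd : BddAbove (Set.range fun h : Fin (8 * m + 1) =>
      g (Real.pi * (h : ℝ) / (4 * (m : ℝ)))) := Set.Finite.bddAbove (Set.finite_range _)
  have hMle : ∀ h : ℕ, h < 8 * m → g (θf h) ≤ M := by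
    intro h hh
    have := le_ciSup hbdd ⟨h, by omega⟩
    simpa using this
  -- the key complex identity for each kernel size n
  have keyn : ∀ n : ℕ, n ≤ 6 * m →
      (∑ h ∈ Finset.range (8 * m), (trigF n (x - θf h) : ℂ) * (g (θf h) : ℂ))
        = ∑ l ∈ Finset.Icc (-(2 * (m : ℤ))) (2 * (m : ℤ)),
            c l * ((cnt n l : ℂ) * (8 * m) * Complex.exp ((l : ℂ) * (x : ℂ) * I)) := by
    intro n hn
    calc ∑ h ∈ Finset.range (8 * m), (trigF n (x - θf h) : ℂ) * (g (θf h) : ℂ)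
        = ∑ h ∈ Finset.range (8 * m), ∑ l ∈ Finset.Icc (-(2 * (m : ℤ))) (2 * (m : ℤ)),
            c l * ((trigF n (x - θf h) : ℂ) * Complex.exp ((l : ℂ) * ((θf h : ℝ) : ℂ) * I)) := by
          refine Finset.sum_congr rfl fun h _ => ?_
          rw [hg (θf h), Finset.mul_sum]
          refine Finset.sum_congr rfl fun l _ => by ring
      _ = ∑ l ∈ Finset.Icc (-(2 * (m : ℤ))) (2 * (m : ℤ)),
            c l * ∑ h ∈ Finset.range (8 * m),
              (trigF n (x - θf h) : ℂ) * Complex.exp ((l : ℂ) * ((θf h : ℝ) : ℂ) * I) := by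
          rw [Finset.sum_comm]
          exact Finset.sum_congr rfl fun l _ => by rw [Finset.mul_sum]
      _ = ∑ l ∈ Finset.Icc (-(2 * (m : ℤ))) (2 * (m : ℤ)),
            c l * ((cnt n l : ℂ) * (8 * m) * Complex.exp ((l : ℂ) * (x : ℂ) * I)) := by
          refine Finset.sum_congr rfl fun l hl => ?_
          simp only [Finset.mem_Icc] at hl
          rw [rep m n hm hn l (by omega) x]
  -- combined identity with the de la Vallée Poussin type kernel F6 - F2
  have key : (∑ h ∈ Finset.range (8 * m),
      ((trigF (6 * m) (x - θf h) - trigF (2 * m) (x - θf h) : ℝ) : ℂ) * (g (θf h) : ℂ))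
        = (32 * (m : ℂ) ^ 2) * (g x : ℂ) := by
    have e6 := keyn (6 * m) (le_refl _)
    have e2 := keyn (2 * m) (by omega)
    have lhs : (∑ h ∈ Finset.range (8 * m),
        ((trigF (6 * m) (x - θf h) - trigF (2 * m) (x - θf h) : ℝ) : ℂ) * (g (θf h) : ℂ))
        = (∑ h ∈ Finset.range (8 * m), (trigF (6 * m) (x - θf h) : ℂ) * (g (θf h) : ℂ))
          - ∑ h ∈ Finset.range (8 * m), (trigF (2 * m) (x - θf h) : ℂ) * (g (θf h) : ℂ) := by
      rw [← Finset.sum_sub_distrib]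
      refine Finset.sum_congr rfl fun h _ => ?_
      push_cast
      ring
    rw [lhs, e6, e2, ← Finset.sum_sub_distrib]
    have : ∀ l ∈ Finset.Icc (-(2 * (m : ℤ))) (2 * (m : ℤ)),
        c l * ((cnt (6 * m) l : ℂ) * (8 * m) * Complex.exp ((l : ℂ) * (x : ℂ) * I))
          - c l * ((cnt (2 * m) l : ℂ) * (8 * m) * Complex.exp ((l : ℂ) * (x : ℂ) * I))
        = (32 * (m : ℂ) ^ 2) * (c l * Complex.exp ((l : ℂ) * (x : ℂ) * I)) := by
      intro l hl
      simp only [Finset.mem_Icc] at hl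
      have hla : l.natAbs ≤ 2 * m := by omega
      have c6 : cnt (6 * m) l = 6 * m - l.natAbs := cnt_eq _ _ (by omega)
      have c2 : cnt (2 * m) l = 2 * m - l.natAbs := cnt_eq _ _ hla
      have hdiff : cnt (6 * m) l = cnt (2 * m) l + 4 * m := by omega
      rw [hdiff]
      push_cast
      ring
    rw [Finset.sum_congr rfl this, ← Finset.mul_sum, ← hg x]
  -- real version
  have keyR : (∑ h ∈ Finset.range (8 * m),
      (trigF (6 * m) (x - θf h) - trigF (2 * m) (x - θf h)) * g (θf h))
        = 32 * (m : ℝ) ^ 2 * g x := by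
    exact_mod_cast key
  -- total mass of each kernel on the grid
  have massn : ∀ n : ℕ, n ≤ 6 * m →
      (∑ h ∈ Finset.range (8 * m), trigF n (x - θf h)) = (n : ℝ) * (8 * m) := by
    intro n hn
    have := rep m n hm hn 0 (by simp) x
    simp only [Int.cast_zero, zero_mul, Complex.exp_zero, mul_one] at this
    have c0 : cnt n 0 = n := by simpa using cnt_eq n 0 (by simp)
    rw [c0] at this
    simp only [hθf]
    exact_mod_cast this
  have mass6 := massn (6 * m) (le_refl _)
  have mass2 := massn (2 * m) (by omega)
  -- the chain of inequalities
  have step1 : 32 * (m : ℝ) ^ 2 * g x ≤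
      ∑ h ∈ Finset.range (8 * m),
        (trigF (6 * m) (x - θf h) + trigF (2 * m) (x - θf h)) * g (θf h) := by
    rw [← keyR]
    refine Finset.sum_le_sum fun h _ => ?_
    have h2 := trigF_nonneg (2 * m) (x - θf h)
    exact mul_le_mul_of_nonneg_right (by linarith) (hpos _)
  have step2 : ∑ h ∈ Finset.range (8 * m),
      (trigF (6 * m) (x - θf h) + trigF (2 * m) (x - θf h)) * g (θf h)
        ≤ 64 * (m : ℝ) ^ 2 * M := by
    have : ∑ h ∈ Finset.range (8 * m),
        (trigF (6 * m) (x - θf h) + trigF (2 * m) (x - θf h)) * g (θf h)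
        ≤ ∑ h ∈ Finset.range (8 * m),
          (trigF (6 * m) (x - θf h) + trigF (2 * m) (x - θf h)) * M := by
      refine Finset.sum_le_sum fun h hh => ?_
      have h6 := trigF_nonneg (6 * m) (x - θf h)
      have h2 := trigF_nonneg (2 * m) (x - θf h)
      refine mul_le_mul_of_nonneg_left ?_ (by linarith)
      exact hMle h (Finset.mem_range.mp hh)
    calc ∑ h ∈ Finset.range (8 * m),
        (trigF (6 * m) (x - θf h) + trigF (2 * m) (x - θf h)) * g (θf h)
        ≤ ∑ h ∈ Finset.range (8 * m),
          (trigF (6 * m) (x - θf h) + trigF (2 * m) (x - θf h)) * M := this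
      _ = (∑ h ∈ Finset.range (8 * m),
          (trigF (6 * m) (x - θf h) + trigF (2 * m) (x - θf h))) * M := by
          rw [Finset.sum_mul]
      _ = 64 * (m : ℝ) ^ 2 * M := by
          rw [Finset.sum_add_distrib, mass6, mass2]
          push_cast
          ring
  have hm2 : (0 : ℝ) < (m : ℝ) ^ 2 := by positivity
  nlinarith [step1, step2]
end
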